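/- arXiv:1402.5481 — 3 statements merged into one kernel-verified Lean document; each statement's English description precedes it below -/
import Mathlib

section
/- Rademacher contraction for multivariate decisions: let σ₀, σ₁, …, σ_d be independent random variables each equal to +1 or −1 with probability 1/2. Let T ⊂ ℝ × ℝ^d be such that the suprema below are attained (e.g., T finite), and let φ : ℝ^d → ℝ be 1-Lipschitz with respect to the ∞-norm. Then E[ sup_{(t,z) ∈ T} ( t + σ₀ φ(z) ) ] ≤ E[ sup_{(t,z) ∈ T} ( t + Σ_{k=1}^d σ_k z_k ) ]. -/
open Finset

/-- The value ±1 of a Rademacher sign encoded by a Boolean. -/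
def sgn (b : Bool) : ℝ := if b then 1 else -1

lemma sgn_not (b : Bool) : sgn (!b) = - sgn b := by cases b <;> simp [sgn]

lemma flip_card {d : ℕ} (K : Fin d) (s : Bool) :
    (univ.filter (fun ε : Fin d → Bool => ε K = s)).card
      = (univ.filter (fun ε : Fin d → Bool => ε K = !s)).card :=
  Finset.card_bij' (fun ε _ => Function.update ε K (!ε K))
    (fun ε _ => Function.update ε K (!ε K))
    (fun a ha => by
      simp only [mem_filter, mem_univ, true_and] at ha ⊢; simp [ha])
    (fun a ha => by
      simp only [mem_filter, mem_univ, true_and] at ha ⊢; simp [ha])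
    (fun a _ => by
      funext j
      rcases eq_or_ne j K with rfl | hj
      · simp
      · simp [Function.update_of_ne hj])
    (fun a _ => by
      funext j
      rcases eq_or_ne j K with rfl | hj
      · simp
      · simp [Function.update_of_ne hj])

lemma sum_sgn_filter {d : ℕ} (K k : Fin d) (s : Bool) :
    ∑ ε ∈ univ.filter (fun ε : Fin d → Bool => ε K = s), sgn (ε k)
      = if k = K then ((univ.filter (fun ε : Fin d → Bool => ε K = s)).card : ℝ) * sgn s
        else 0 := by
  split
  · next h =>
    subst h
    rw [Finset.sum_congr rfl (fun ε hε => by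
      simp only [mem_filter] at hε; rw [hε.2])]
    simp [mul_comm]
  · next h =>
    exact Finset.sum_involution (fun ε _ => Function.update ε k (!ε k))
      (fun a _ => by simp [sgn_not])
      (fun a _ _ => by
        intro hc
        have := congrFun hc k
        simp at this)
      (fun a ha => by
        simp only [mem_filter, mem_univ, true_and] at ha ⊢
        rw [Function.update_of_ne (fun hc => h hc.symm)]
        exact ha)
      (fun a _ => by
        funext j
        rcases eq_or_ne j k with rfl | hj
        · simp
        · simp [Function.update_of_ne hj])

lemma sum_filter_lin {d : ℕ} (K : Fin d) (s : Bool) (t : ℝ) (w : Fin d → ℝ) :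
    ∑ ε ∈ univ.filter (fun ε : Fin d → Bool => ε K = s),
        (t + ∑ k, sgn (ε k) * w k)
      = ((univ.filter (fun ε : Fin d → Bool => ε K = s)).card : ℝ)
          * (t + sgn s * w K) := by
  rw [Finset.sum_add_distrib, Finset.sum_const, Finset.sum_comm]
  have h1 : ∀ k : Fin d, ∑ ε ∈ univ.filter (fun ε : Fin d → Bool => ε K = s),
      sgn (ε k) * w k
      = (if k = K then ((univ.filter (fun ε : Fin d → Bool => ε K = s)).card : ℝ)
          * sgn s else 0) * w k := by
    intro k
    rw [← Finset.sum_mul, sum_sgn_filter]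
  rw [Finset.sum_congr rfl (fun k _ => h1 k)]
  simp only [ite_mul, zero_mul, Finset.sum_ite_eq' univ K, mem_univ, if_true,
    nsmul_eq_mul]
  ring

/-- Rademacher contraction for multivariate decisions:
E[sup_{(t,z)∈T} (t + σ₀ φ(z))] ≤ E[sup_{(t,z)∈T} (t + Σ_k σ_k z_k)]
for φ 1-Lipschitz w.r.t. the ∞-norm. -/
theorem stmt9 (d : ℕ) (hd : 0 < d) (T : Finset (ℝ × (Fin d → ℝ))) (hT : T.Nonempty)
    (φ : (Fin d → ℝ) → ℝ)
    (hφ : ∀ z z' : Fin d → ℝ,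
      |φ z - φ z'| ≤
        Finset.univ.sup' (Finset.univ_nonempty_iff.mpr (Fin.pos_iff_nonempty.mp hd))
          (fun k => |z k - z' k|)) :
    ((1 : ℝ) / 2) * ∑ b : Bool, T.sup' hT (fun p => p.1 + sgn b * φ p.2) ≤
      ((1 : ℝ) / 2 ^ d) * ∑ ε : Fin d → Bool,
        T.sup' hT (fun p => p.1 + ∑ k, sgn (ε k) * p.2 k) := by
  -- maximizers
  obtain ⟨p, hp, hpe⟩ := Finset.exists_mem_eq_sup' hT (fun p => p.1 + sgn true * φ p.2)
  obtain ⟨q, hq, hqe⟩ := Finset.exists_mem_eq_sup' hT (fun p => p.1 + sgn false * φ p.2)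
  set t := p.1; set z := p.2; set t' := q.1; set z' := q.2
  obtain ⟨K, _, hKe⟩ := Finset.exists_mem_eq_sup'
    (Finset.univ_nonempty_iff.mpr (Fin.pos_iff_nonempty.mp hd)) (fun k => |z k - z' k|)
  set s : Bool := decide (z' K ≤ z K) with hs
  have habs : sgn s * (z K - z' K) = |z K - z' K| := by
    rcases le_or_gt (z' K) (z K) with h | h
    · rw [abs_of_nonneg (by linarith)]; simp [hs, h, sgn]
    · rw [abs_of_neg (by linarith)]
      have hn : ¬ (z' K ≤ z K) := not_le.mpr h
      simp [hs, hn, sgn]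
  have h1 : |φ z - φ z'| ≤ |z K - z' K| := hKe ▸ hφ z z'
  have h2 : φ z - φ z' ≤ |z K - z' K| := le_trans (le_abs_self _) h1
  -- LHS bound
  have hLHS : ∑ b : Bool, T.sup' hT (fun p => p.1 + sgn b * φ p.2)
      ≤ t + t' + sgn s * (z K - z' K) := by
    rw [Fintype.sum_bool, hpe, hqe]
    have e1 : sgn true = 1 := rfl
    have e2 : sgn false = -1 := rfl
    rw [e1, e2]
    linarith [habs, h2]
  -- RHS bound
  set A := univ.filter (fun ε : Fin d → Bool => ε K = s) with hA
  have hfneg : (univ.filter (fun ε : Fin d → Bool => ¬ ε K = s))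
      = univ.filter (fun ε : Fin d → Bool => ε K = !s) := by
    apply Finset.filter_congr
    intro ε _
    cases hb : ε K <;> cases s <;> simp [hb]
  have hcard2 : 2 * (A.card : ℝ) = 2 ^ d := by
    have h1 := Finset.card_filter_add_card_filter_not
      (s := (univ : Finset (Fin d → Bool))) (fun ε => ε K = s)
    have h4 : (univ : Finset (Fin d → Bool)).card = 2 ^ d := by simp
    rw [hfneg, ← flip_card K s, h4, ← hA] at h1
    have : 2 * A.card = 2 ^ d := by omega
    exact_mod_cast this
  have hRHS : (A.card : ℝ) * (t + t' + sgn s * (z K - z' K))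
      ≤ ∑ ε : Fin d → Bool, T.sup' hT (fun p => p.1 + ∑ k, sgn (ε k) * p.2 k) := by
    have key : ∀ ε : Fin d → Bool,
        (if ε K = s then (t + ∑ k, sgn (ε k) * z k) else (t' + ∑ k, sgn (ε k) * z' k))
          ≤ T.sup' hT (fun p => p.1 + ∑ k, sgn (ε k) * p.2 k) := by
      intro ε
      split
      · exact Finset.le_sup' (fun p => p.1 + ∑ k, sgn (ε k) * p.2 k) hp
      · exact Finset.le_sup' (fun p => p.1 + ∑ k, sgn (ε k) * p.2 k) hq
    calc (A.card : ℝ) * (t + t' + sgn s * (z K - z' K))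
        = ∑ ε : Fin d → Bool, (if ε K = s then (t + ∑ k, sgn (ε k) * z k)
            else (t' + ∑ k, sgn (ε k) * z' k)) := by
          rw [Finset.sum_ite, hfneg, sum_filter_lin, sum_filter_lin, ← flip_card,
            sgn_not, ← hA]
          ring
      _ ≤ _ := Finset.sum_le_sum (fun ε _ => key ε)
  have hpow : (0:ℝ) < 2 ^ d := by positivity
  have hhalf : (1:ℝ)/2 = (1:ℝ)/2^d * (A.card : ℝ) := by
    field_simp
    linarith [hcard2]
  calc ((1 : ℝ) / 2) * ∑ b : Bool, T.sup' hT (fun p => p.1 + sgn b * φ p.2)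
      ≤ ((1 : ℝ) / 2) * (t + t' + sgn s * (z K - z' K)) := by linarith
    _ = ((1 : ℝ) / 2 ^ d) * ((A.card : ℝ) * (t + t' + sgn s * (z K - z' K))) := by
        rw [← mul_assoc, ← hhalf]
    _ ≤ _ := mul_le_mul_of_nonneg_left hRHS (by positivity)
end

section
/- Multivariate Rademacher comparison: let 𝓕 be a finite class of functions f : 𝒳 → ℝ^d and suppose the cost c(z; y) is L-Lipschitz in z uniformly over y with respect to the ∞-norm. Then for any sample points (x^1,y^1),…,(x^N,y^N), E[ (2/N) sup_{f ∈ 𝓕} Σ_i σ_{i0} c(f(x^i); y^i) ] ≤ L · E[ (2/N) sup_{f ∈ 𝓕} Σ_i Σ_{k=1}^d σ_{ik} f_k(x^i) ], where all σ_{ik} are independent Rademacher signs. -/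
open Finset

lemma abs_sgn (b : Bool) : |sgn b| = 1 := by cases b <;> simp [sgn]

lemma sup'_const_mul {ι : Type*} (F : Finset ι) (hF : F.Nonempty) (L : ℝ) (hL : 0 ≤ L)
    (g : ι → ℝ) : F.sup' hF (fun f => L * g f) = L * F.sup' hF g := by
  rw [Finset.comp_sup'_eq_sup'_comp hF (fun t => L * t) (fun a b => mul_max_of_nonneg a b hL)]
  rfl

lemma keyA {ι : Type*} (F : Finset ι) (hF : F.Nonempty) {d : ℕ}
    (hne : (Finset.univ : Finset (Fin d)).Nonempty)
    (A C : ι → ℝ) (G : ι → Fin d → ℝ) (L : ℝ) (hL0 : 0 ≤ L)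
    (h : ∀ f g, C f - C g ≤ L * Finset.univ.sup' hne (fun k => |G f k - G g k|)) :
    (2:ℝ)^d * ∑ b : Bool, F.sup' hF (fun f => A f + sgn b * C f)
      ≤ 2 * ∑ η : Fin d → Bool, F.sup' hF (fun f => A f + L * ∑ k, sgn (η k) * G f k) := by
  obtain ⟨f₀, hf₀m, hf₀⟩ := Finset.exists_mem_eq_sup' hF (fun f => A f + C f)
  obtain ⟨g₀, hg₀m, hg₀⟩ := Finset.exists_mem_eq_sup' hF (fun f => A f - C f)
  set δ : Fin d → ℝ := fun k => G f₀ k - G g₀ k with hδ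
  obtain ⟨k₀, _, hk₀⟩ := Finset.exists_mem_eq_sup' hne (fun k => |δ k|)
  set M : ℝ := Finset.univ.sup' hne (fun k => |δ k|) with hM
  -- LHS bound
  have hLHS : ∑ b : Bool, F.sup' hF (fun f => A f + sgn b * C f) ≤ A f₀ + A g₀ + L * M := by
    rw [Fintype.sum_bool]
    have e1 : F.sup' hF (fun f => A f + sgn true * C f) = A f₀ + C f₀ := by
      rw [show (fun f => A f + sgn true * C f) = fun f => A f + C f by
        funext f; simp [sgn]]
      exact hf₀
    have e2 : F.sup' hF (fun f => A f + sgn false * C f) = A g₀ - C g₀ := by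
      rw [show (fun f => A f + sgn false * C f) = fun f => A f - C f by
        funext f; simp [sgn, sub_eq_add_neg]]
      exact hg₀
    have := h f₀ g₀
    rw [e1, e2]
    have hMd : Finset.univ.sup' hne (fun k => |G f₀ k - G g₀ k|) = M := rfl
    linarith [hMd ▸ this]
  -- RHS bound
  set T : (Fin d → Bool) → ι → ℝ := fun η f => ∑ k, sgn (η k) * G f k with hT
  set D : (Fin d → Bool) → ℝ := fun η => ∑ k, sgn (η k) * δ k with hD
  set S : (Fin d → Bool) → ℝ := fun η => F.sup' hF (fun f => A f + L * T η f) with hS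
  have hTD : ∀ η, T η f₀ - T η g₀ = D η := by
    intro η
    simp only [hT, hD, hδ, ← Finset.sum_sub_distrib, mul_sub]
  have hTneg : ∀ η f, T (fun k => !η k) f = - T η f := by
    intro η f
    simp only [hT, sgn_not, neg_mul, Finset.sum_neg_distrib]
  -- negation involution
  have negInv : Function.Involutive (fun η : Fin d → Bool => (fun k => !η k)) := by
    intro η; funext k; simp
  have hSneg : ∑ η : Fin d → Bool, S (fun k => !η k) = ∑ η, S η :=
    Equiv.sum_comp negInv.toPerm S
  -- flip at k₀
  set flip : (Fin d → Bool) → (Fin d → Bool) := fun η k => if k = k₀ then !η k else η k with hflip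
  have flipInv : Function.Involutive flip := by
    intro η; funext k; by_cases hk : k = k₀ <;> simp [hflip, hk]
  have hDflip : ∀ η, D η - D (flip η) = 2 * sgn (η k₀) * δ k₀ := by
    intro η
    simp only [hD, ← Finset.sum_sub_distrib]
    rw [Finset.sum_eq_single k₀]
    · simp only [hflip, if_pos rfl, sgn_not]; ring
    · intro k _ hk; simp [hflip, hk]
    · intro hk; exact absurd (Finset.mem_univ k₀) hk
  have hDsum : (2:ℝ)^d * |δ k₀| ≤ ∑ η : Fin d → Bool, |D η| := by
    have hflipsum : ∑ η : Fin d → Bool, |D (flip η)| = ∑ η, |D η| :=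
      Equiv.sum_comp flipInv.toPerm (fun η => |D η|)
    have h1 : ∀ η, 2 * |δ k₀| ≤ |D η| + |D (flip η)| := by
      intro η
      have : |D η - D (flip η)| ≤ |D η| + |D (flip η)| := abs_sub _ _
      rw [hDflip η, abs_mul, abs_mul, abs_sgn] at this
      simp only [abs_two, mul_one] at this
      linarith
    have h2 : ∑ η : Fin d → Bool, (2 * |δ k₀|) ≤ ∑ η : Fin d → Bool, (|D η| + |D (flip η)|) :=
      Finset.sum_le_sum (fun η _ => h1 η)
    rw [Finset.sum_add_distrib, hflipsum, Finset.sum_const, Finset.card_univ] at h2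
    have hcard : Fintype.card (Fin d → Bool) = 2 ^ d := by simp [Fintype.card_fun]
    rw [hcard, nsmul_eq_mul] at h2
    push_cast at h2
    linarith
  have hpair : ∀ η, A f₀ + A g₀ + L * |D η| ≤ S η + S (fun k => !η k) := by
    intro η
    have b1 : A f₀ + L * T η f₀ ≤ S η := Finset.le_sup' (fun f => A f + L * T η f) hf₀m
    have b2 : A g₀ + L * T η g₀ ≤ S η := Finset.le_sup' (fun f => A f + L * T η f) hg₀m
    have b3 : A f₀ + L * T (fun k => !η k) f₀ ≤ S (fun k => !η k) :=
      Finset.le_sup' (fun f => A f + L * T (fun k => !η k) f) hf₀m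
    have b4 : A g₀ + L * T (fun k => !η k) g₀ ≤ S (fun k => !η k) :=
      Finset.le_sup' (fun f => A f + L * T (fun k => !η k) f) hg₀m
    rw [hTneg η f₀] at b3
    rw [hTneg η g₀] at b4
    have hb : L * T η f₀ - L * T η g₀ = L * D η := by rw [← hTD η]; ring
    rcases abs_cases (D η) with ⟨he, _⟩ | ⟨he, _⟩ <;> rw [he] <;> linarith
  have hRHS : (2:ℝ)^d * (A f₀ + A g₀ + L * M) ≤ 2 * ∑ η : Fin d → Bool, S η := by
    have h2 : ∑ η : Fin d → Bool, (A f₀ + A g₀ + L * |D η|) ≤ ∑ η : Fin d → Bool, (S η + S (fun k => !η k)) :=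
      Finset.sum_le_sum (fun η _ => hpair η)
    have hcard : Fintype.card (Fin d → Bool) = 2 ^ d := by simp [Fintype.card_fun]
    have e1 : ∑ η : Fin d → Bool, (S η + S (fun k => !η k)) = 2 * ∑ η : Fin d → Bool, S η := by
      rw [Finset.sum_add_distrib, hSneg]; ring
    have e2 : ∑ η : Fin d → Bool, (A f₀ + A g₀ + L * |D η|)
        = (2:ℝ)^d * (A f₀ + A g₀) + L * ∑ η : Fin d → Bool, |D η| := by
      rw [Finset.sum_add_distrib, Finset.sum_const, Finset.card_univ, hcard, nsmul_eq_mul,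
        ← Finset.mul_sum]
      push_cast; ring
    rw [e1, e2] at h2
    have hM0 : M = |δ k₀| := hk₀
    have h3 := mul_le_mul_of_nonneg_left hDsum hL0
    rw [hM0]
    nlinarith [h2, h3]
  calc (2:ℝ)^d * ∑ b : Bool, F.sup' hF (fun f => A f + sgn b * C f)
      ≤ (2:ℝ)^d * (A f₀ + A g₀ + L * M) := by
        apply mul_le_mul_of_nonneg_left hLHS (by positivity)
    _ ≤ 2 * ∑ η : Fin d → Bool, S η := hRHS

/-- Multivariate Rademacher comparison: the empirical Rademacher complexity of the class
of composed costs {(x,y) ↦ c(f(x);y) : f ∈ 𝓕} is at most L times the empirical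
multivariate Rademacher complexity of 𝓕, for c L-Lipschitz in z w.r.t. the ∞-norm. -/
theorem stmt10 {𝒳 𝒴 : Type*} (d N : ℕ) (hd : 0 < d) (hN : 0 < N)
    (F : Finset (𝒳 → Fin d → ℝ)) (hF : F.Nonempty)
    (c : (Fin d → ℝ) → 𝒴 → ℝ) (L : ℝ)
    (hL : ∀ z z' : Fin d → ℝ, ∀ y : 𝒴,
      c z y - c z' y ≤
        L * Finset.univ.sup' (Finset.univ_nonempty_iff.mpr (Fin.pos_iff_nonempty.mp hd))
          (fun k => |z k - z' k|))
    (x : Fin N → 𝒳) (y : Fin N → 𝒴) :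
    ((1 : ℝ) / 2 ^ N) * ∑ ε : Fin N → Bool,
        ((2 : ℝ) / N) * F.sup' hF (fun f => ∑ i, sgn (ε i) * c (f (x i)) (y i)) ≤
      L * (((1 : ℝ) / 2 ^ (N * d)) * ∑ ε : Fin N → Fin d → Bool,
        ((2 : ℝ) / N) * F.sup' hF (fun f => ∑ i, ∑ k, sgn (ε i k) * f (x i) k)) := by
  have hne : (Finset.univ : Finset (Fin d)).Nonempty :=
    Finset.univ_nonempty_iff.mpr (Fin.pos_iff_nonempty.mp hd)
  -- L is nonnegative
  have hL0 : 0 ≤ L := by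
    have y0 := y ⟨0, hN⟩
    have h1 := hL (fun _ => 0) (fun _ => 1) y0
    have h2 := hL (fun _ => 1) (fun _ => 0) y0
    have hs : (Finset.univ.sup' (Finset.univ_nonempty_iff.mpr (Fin.pos_iff_nonempty.mp hd))
        (fun k : Fin d => |(0:ℝ) - 1|)) = 1 := by
      rw [Finset.sup'_const]; norm_num
    have hs2 : (Finset.univ.sup' (Finset.univ_nonempty_iff.mpr (Fin.pos_iff_nonempty.mp hd))
        (fun k : Fin d => |(1:ℝ) - 0|)) = 1 := by
      rw [Finset.sup'_const]; norm_num
    rw [hs] at h1; rw [hs2] at h2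
    linarith
  -- the interpolating quantity
  set Q : ℕ → ℝ := fun j => ∑ ε : Fin N → Bool, ∑ η : Fin N → Fin d → Bool,
    F.sup' hF (fun f => ∑ i : Fin N, if (i:ℕ) < j then L * ∑ k, sgn (η i k) * f (x i) k
      else sgn (ε i) * c (f (x i)) (y i)) with hQ
  set P : ℝ := ∑ ε : Fin N → Bool, F.sup' hF (fun f => ∑ i, sgn (ε i) * c (f (x i)) (y i)) with hP
  set R : ℝ := ∑ η : Fin N → Fin d → Bool,
    F.sup' hF (fun f => ∑ i, ∑ k, sgn (η i k) * f (x i) k) with hR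
  have hcard : Fintype.card (Fin N → Fin d → Bool) = 2 ^ (N * d) := by
    rw [Fintype.card_fun, Fintype.card_fin,
      show Fintype.card (Fin d → Bool) = 2 ^ d by simp [Fintype.card_fun], ← pow_mul, mul_comm]
  have hQ0 : Q 0 = 2 ^ (N * d) * P := by
    rw [hQ]
    simp only [Nat.not_lt_zero, if_false]
    simp only [Finset.sum_const, Finset.card_univ, hcard, nsmul_eq_mul]
    rw [hP, Finset.mul_sum]
    push_cast
    rfl
  have hQN : Q N = 2 ^ N * (L * R) := by
    rw [hQ]
    simp only [Fin.is_lt, if_true]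
    have hsup : ∀ η : Fin N → Fin d → Bool,
        F.sup' hF (fun f => ∑ i : Fin N, L * ∑ k, sgn (η i k) * f (x i) k)
          = L * F.sup' hF (fun f => ∑ i : Fin N, ∑ k, sgn (η i k) * f (x i) k) := by
      intro η
      rw [← sup'_const_mul F hF L hL0]
      congr 1; funext f; rw [Finset.mul_sum]
    simp only [hsup]
    rw [← Finset.mul_sum, ← hR]
    rw [Finset.sum_const, Finset.card_univ, nsmul_eq_mul]
    have : Fintype.card (Fin N → Bool) = 2 ^ N := by simp [Fintype.card_fun]
    rw [this]
    push_cast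
    ring
  have step : ∀ j, j < N → Q j ≤ Q (j + 1) := by
    intro j hj
    set J : Fin N := ⟨j, hj⟩ with hJdef
    set W : ℕ → (Fin N → Bool) → (Fin N → Fin d → Bool) → ℝ := fun m ε η =>
      F.sup' hF (fun f => ∑ i : Fin N, if (i:ℕ) < m then L * ∑ k, sgn (η i k) * f (x i) k
        else sgn (ε i) * c (f (x i)) (y i)) with hW
    have comm3 : ∀ {α β γ : Type} [Fintype α] [Fintype β] [Fintype γ]
        (f : α → β → γ → ℝ), ∑ a : α, ∑ b : β, ∑ c : γ, f a b c
          = ∑ c : γ, ∑ a : α, ∑ b : β, f a b c := by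
      intro α β γ _ _ _ f
      have h1 : ∀ a : α, ∑ b : β, ∑ c : γ, f a b c = ∑ c : γ, ∑ b : β, f a b c :=
        fun a => Finset.sum_comm
      simp_rw [h1]
      exact Finset.sum_comm
    have reidx : ∀ m : ℕ, Q m = ∑ ε' : {i : Fin N // i ≠ J} → Bool,
        ∑ η' : {i : Fin N // i ≠ J} → (Fin d → Bool), ∑ b : Bool, ∑ θ : Fin d → Bool,
          W m ((Equiv.funSplitAt J Bool).symm (b, ε'))
            ((Equiv.funSplitAt J (Fin d → Bool)).symm (θ, η')) := by
      intro m
      have s1 : Q m = ∑ ε : Fin N → Bool, ∑ η : Fin N → Fin d → Bool, W m ε η := rfl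
      rw [s1]
      rw [← Equiv.sum_comp (Equiv.funSplitAt J Bool).symm
        (fun ε => ∑ η : Fin N → Fin d → Bool, W m ε η)]
      rw [Fintype.sum_prod_type]
      have s2 : ∀ (ε : Fin N → Bool), ∑ η : Fin N → Fin d → Bool, W m ε η
          = ∑ θ : Fin d → Bool, ∑ η' : {i : Fin N // i ≠ J} → (Fin d → Bool),
              W m ε ((Equiv.funSplitAt J (Fin d → Bool)).symm (θ, η')) := by
        intro ε
        rw [← Equiv.sum_comp (Equiv.funSplitAt J (Fin d → Bool)).symm
          (fun η => W m ε η), Fintype.sum_prod_type]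
      simp_rw [s2]
      rw [Finset.sum_comm]
      congr 1; funext ε'
      exact comm3 _
    rw [reidx j, reidx (j+1)]
    apply Finset.sum_le_sum; intro ε' _
    apply Finset.sum_le_sum; intro η' _
    -- fixed off-J signs
    set Ac : (𝒳 → Fin d → ℝ) → ℝ := fun f => ∑ i ∈ Finset.univ.erase J,
      (if (i:ℕ) < j then
        L * ∑ k, sgn (((Equiv.funSplitAt J (Fin d → Bool)).symm (fun _ => true, η')) i k)
          * f (x i) k
      else sgn (((Equiv.funSplitAt J Bool).symm (true, ε')) i) * c (f (x i)) (y i)) with hAc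
    have hJval : ((J : Fin N) : ℕ) = j := rfl
    have hWj : ∀ (b : Bool) (θ : Fin d → Bool),
        W j ((Equiv.funSplitAt J Bool).symm (b, ε'))
          ((Equiv.funSplitAt J (Fin d → Bool)).symm (θ, η'))
        = F.sup' hF (fun f => Ac f + sgn b * c (f (x J)) (y J)) := by
      intro b θ
      simp only [hW]
      congr 1; funext f
      have hsplit := Finset.add_sum_erase Finset.univ
        (fun i : Fin N => if (i:ℕ) < j then
          L * ∑ k, sgn (((Equiv.funSplitAt J (Fin d → Bool)).symm (θ, η')) i k) * f (x i) k
        else sgn (((Equiv.funSplitAt J Bool).symm (b, ε')) i) * c (f (x i)) (y i))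
        (Finset.mem_univ J)
      rw [← hsplit]
      beta_reduce
      have hterm : (if ((J : Fin N) : ℕ) < j then
            L * ∑ k, sgn (((Equiv.funSplitAt J (Fin d → Bool)).symm (θ, η')) J k) * f (x J) k
          else sgn (((Equiv.funSplitAt J Bool).symm (b, ε')) J) * c (f (x J)) (y J))
          = sgn b * c (f (x J)) (y J) := by
        rw [if_neg (by omega)]
        simp [Equiv.funSplitAt_symm_apply]
      rw [hterm]
      have hsum : ∑ i ∈ Finset.univ.erase J, (if (i:ℕ) < j then
            L * ∑ k, sgn (((Equiv.funSplitAt J (Fin d → Bool)).symm (θ, η')) i k) * f (x i) k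
          else sgn (((Equiv.funSplitAt J Bool).symm (b, ε')) i) * c (f (x i)) (y i))
          = Ac f := by
        rw [hAc]
        apply Finset.sum_congr rfl
        intro i hi
        have hiJ : i ≠ J := (Finset.mem_erase.mp hi).1
        simp only [Equiv.funSplitAt_symm_apply, dif_neg hiJ]
      rw [hsum, add_comm]
    have hWj1 : ∀ (b : Bool) (θ : Fin d → Bool),
        W (j+1) ((Equiv.funSplitAt J Bool).symm (b, ε'))
          ((Equiv.funSplitAt J (Fin d → Bool)).symm (θ, η'))
        = F.sup' hF (fun f => Ac f + L * ∑ k, sgn (θ k) * f (x J) k) := by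
      intro b θ
      simp only [hW]
      congr 1; funext f
      have hsplit := Finset.add_sum_erase Finset.univ
        (fun i : Fin N => if (i:ℕ) < j + 1 then
          L * ∑ k, sgn (((Equiv.funSplitAt J (Fin d → Bool)).symm (θ, η')) i k) * f (x i) k
        else sgn (((Equiv.funSplitAt J Bool).symm (b, ε')) i) * c (f (x i)) (y i))
        (Finset.mem_univ J)
      rw [← hsplit]
      beta_reduce
      have hterm : (if ((J : Fin N) : ℕ) < j + 1 then
            L * ∑ k, sgn (((Equiv.funSplitAt J (Fin d → Bool)).symm (θ, η')) J k) * f (x J) k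
          else sgn (((Equiv.funSplitAt J Bool).symm (b, ε')) J) * c (f (x J)) (y J))
          = L * ∑ k, sgn (θ k) * f (x J) k := by
        rw [if_pos (by omega)]
        simp [Equiv.funSplitAt_symm_apply]
      rw [hterm]
      have hsum : ∑ i ∈ Finset.univ.erase J, (if (i:ℕ) < j + 1 then
            L * ∑ k, sgn (((Equiv.funSplitAt J (Fin d → Bool)).symm (θ, η')) i k) * f (x i) k
          else sgn (((Equiv.funSplitAt J Bool).symm (b, ε')) i) * c (f (x i)) (y i))
          = Ac f := by
        rw [hAc]
        apply Finset.sum_congr rfl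
        intro i hi
        have hiJ : i ≠ J := (Finset.mem_erase.mp hi).1
        have hiv : (i : ℕ) ≠ j := fun hc => hiJ (Fin.ext hc)
        have hcond : ((i:ℕ) < j + 1) = ((i:ℕ) < j) := by rw [eq_iff_iff]; omega
        simp only [Equiv.funSplitAt_symm_apply, dif_neg hiJ, hcond]
      rw [hsum, add_comm]
    simp_rw [hWj, hWj1]
    have hdcard : Fintype.card (Fin d → Bool) = 2 ^ d := by simp [Fintype.card_fun]
    have lhs_eq : ∑ b : Bool, ∑ θ : Fin d → Bool,
        F.sup' hF (fun f => Ac f + sgn b * c (f (x J)) (y J))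
        = (2:ℝ)^d * ∑ b : Bool, F.sup' hF (fun f => Ac f + sgn b * c (f (x J)) (y J)) := by
      rw [Finset.mul_sum]
      apply Finset.sum_congr rfl
      intro b _
      rw [Finset.sum_const, Finset.card_univ, hdcard, nsmul_eq_mul]
      push_cast; ring
    have rhs_eq : ∑ b : Bool, ∑ θ : Fin d → Bool,
        F.sup' hF (fun f => Ac f + L * ∑ k, sgn (θ k) * f (x J) k)
        = 2 * ∑ θ : Fin d → Bool, F.sup' hF (fun f => Ac f + L * ∑ k, sgn (θ k) * f (x J) k) := by
      rw [Fintype.sum_bool]; ring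
    rw [lhs_eq, rhs_eq]
    exact keyA F hF hne Ac (fun f => c (f (x J)) (y J)) (fun f => f (x J)) L hL0
      (fun f g => hL (f (x J)) (g (x J)) (y J))
  have mono : ∀ j, j ≤ N → Q 0 ≤ Q j := by
    intro j
    induction j with
    | zero => intro _; exact le_refl _
    | succ n ih =>
      intro hn
      exact le_trans (ih (Nat.le_of_succ_le hn)) (step n (Nat.lt_of_succ_le hn))
  have key : 2 ^ (N * d) * P ≤ 2 ^ N * (L * R) := by
    rw [← hQ0, ← hQN]; exact mono N le_rfl
  -- final arithmetic
  have h2N : (0:ℝ) < 2 ^ N := by positivity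
  have h2Nd : (0:ℝ) < 2 ^ (N * d) := by positivity
  have hN' : (0:ℝ) < N := by exact_mod_cast hN
  rw [← Finset.mul_sum, ← Finset.mul_sum, ← hP, ← hR]
  have h1 : P / 2 ^ N ≤ (L * R) / 2 ^ (N * d) := by
    rw [div_le_div_iff₀ h2N h2Nd]
    nlinarith [key]
  have e1 : ((1:ℝ) / 2 ^ N) * ((2:ℝ) / N * P) = (2 / N) * (P / 2 ^ N) := by ring
  have e2 : L * (((1:ℝ) / 2 ^ (N * d)) * ((2:ℝ) / N * R)) = (2 / N) * ((L * R) / 2 ^ (N * d)) := by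
    ring
  rw [e1, e2]
  apply mul_le_mul_of_nonneg_left h1
  positivity
end

section
/- Nonnegativity and subnormalization of the conditional Kaplan–Meier weight transformation: let w_1, …, w_N ≥ 0 with Σ_i w_i = 1 be given (indexed so that the data is already sorted), and let δ_i ∈ {0,1}. Define for each i with δ_i = 1: w'_i = (w_i / Σ_{ℓ=i}^N w_ℓ) · Π_{k ≤ i−1, δ_k = 1} (Σ_{ℓ=k+1}^N w_ℓ / Σ_{ℓ=k}^N w_ℓ), and w'_i = 0 when δ_i = 0 (with the convention w'_i = 0 whenever any denominator is zero). Then w'_i ≥ 0 for all i and Σ_{i=1}^N w'_i ≤ 1. -/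
open Finset

/-- Tail sum Σ_{ℓ ≥ k} w_ℓ of a weight vector. -/
def kmTail {N : ℕ} (w : Fin N → ℝ) (k : Fin N) : ℝ :=
  ∑ ℓ ∈ Finset.univ.filter (fun ℓ => k ≤ ℓ), w ℓ

open Classical in
/-- The conditional Kaplan–Meier transformed weights: zero on censored points and
whenever a denominator vanishes. -/
noncomputable def kmWeight {N : ℕ} (w : Fin N → ℝ) (δ : Fin N → Bool) (i : Fin N) : ℝ :=
  if δ i = true ∧ kmTail w i ≠ 0 ∧ (∀ k < i, δ k = true → kmTail w k ≠ 0) then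
    (w i / kmTail w i) *
      ∏ k ∈ Finset.univ.filter (fun k => k < i ∧ δ k = true),
        ((kmTail w k - w k) / kmTail w k)
  else 0

/-- Nonnegativity and subnormalization of the Kaplan–Meier weight transformation. -/
theorem stmt14 {N : ℕ} (w : Fin N → ℝ) (δ : Fin N → Bool)
    (hw : ∀ i, 0 ≤ w i) (hsum : ∑ i, w i = 1) :
    (∀ i, 0 ≤ kmWeight w δ i) ∧ ∑ i, kmWeight w δ i ≤ 1 := by
  classical
  have tail_nonneg : ∀ k : Fin N, 0 ≤ kmTail w k := fun k =>
    Finset.sum_nonneg fun ℓ _ => hw ℓ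
  have tail_split : ∀ k : Fin N,
      kmTail w k = w k + ∑ ℓ ∈ univ.filter (fun ℓ : Fin N => k < ℓ), w ℓ := by
    intro k
    have hset : univ.filter (fun ℓ : Fin N => k ≤ ℓ)
        = insert k (univ.filter (fun ℓ : Fin N => k < ℓ)) := by
      ext ℓ
      simp [le_iff_lt_or_eq, or_comm, eq_comm]
    rw [kmTail, hset, Finset.sum_insert (by simp)]
  have sub_nonneg' : ∀ k : Fin N, 0 ≤ kmTail w k - w k := by
    intro k
    have h0 : 0 ≤ ∑ ℓ ∈ univ.filter (fun ℓ : Fin N => k < ℓ), w ℓ :=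
      Finset.sum_nonneg fun ℓ _ => hw ℓ
    have := tail_split k
    linarith
  set f : Fin N → ℝ := fun k => (kmTail w k - w k) / kmTail w k with hf
  have f_nonneg : ∀ k, 0 ≤ f k := fun k => div_nonneg (sub_nonneg' k) (tail_nonneg k)
  have f_le_one : ∀ k, f k ≤ 1 := by
    intro k
    rcases eq_or_lt_of_le (tail_nonneg k) with h | h
    · simp [hf, ← h]
    · exact div_le_one_of_le₀ (by linarith [hw k]) (le_of_lt h)
  set P : ℕ → ℝ := fun j =>
    ∏ k ∈ univ.filter (fun k : Fin N => (k : ℕ) < j ∧ δ k = true), f k with hP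
  have P_nonneg : ∀ j, 0 ≤ P j := fun j => Finset.prod_nonneg fun k _ => f_nonneg k
  have P_zero : P 0 = 1 := by simp [hP]
  have P_succ : ∀ i : Fin N,
      P (i.val + 1) = if δ i = true then P i.val * f i else P i.val := by
    intro i
    by_cases hd : δ i = true
    · have hset : univ.filter (fun k : Fin N => (k : ℕ) < i.val + 1 ∧ δ k = true)
          = insert i (univ.filter (fun k : Fin N => (k : ℕ) < i.val ∧ δ k = true)) := by
        ext k
        simp only [mem_filter, mem_univ, true_and, mem_insert]
        constructor
        · rintro ⟨hk, hdk⟩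
          rcases Nat.lt_succ_iff_lt_or_eq.mp hk with h | h
          · exact Or.inr ⟨h, hdk⟩
          · exact Or.inl (Fin.ext h)
        · rintro (rfl | ⟨hk, hdk⟩)
          · exact ⟨Nat.lt_succ_self _, hd⟩
          · exact ⟨Nat.lt_succ_of_lt hk, hdk⟩
      simp only [hP, hd, if_true]
      rw [hset, Finset.prod_insert (by simp)]
      ring
    · have hset : univ.filter (fun k : Fin N => (k : ℕ) < i.val + 1 ∧ δ k = true)
          = univ.filter (fun k : Fin N => (k : ℕ) < i.val ∧ δ k = true) := by
        ext k
        simp only [mem_filter, mem_univ, true_and]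
        constructor
        · rintro ⟨hk, hdk⟩
          rcases Nat.lt_succ_iff_lt_or_eq.mp hk with h | h
          · exact ⟨h, hdk⟩
          · exfalso; have hk' : k = i := Fin.ext h
            rw [hk'] at hdk; exact hd hdk
        · rintro ⟨hk, hdk⟩
          exact ⟨Nat.lt_succ_of_lt hk, hdk⟩
      simp only [hP]
      rw [if_neg hd, hset]
  have P_le : ∀ i : Fin N, P (i.val + 1) ≤ P i.val := by
    intro i
    rw [P_succ i]
    split
    · exact mul_le_of_le_one_right (P_nonneg _) (f_le_one i)
    · exact le_refl _
  have km_le : ∀ i : Fin N, kmWeight w δ i ≤ P i.val - P (i.val + 1) := by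
    intro i
    by_cases h : δ i = true ∧ kmTail w i ≠ 0 ∧ (∀ k < i, δ k = true → kmTail w k ≠ 0)
    · rw [kmWeight, if_pos h]
      have hQ : (∏ k ∈ univ.filter (fun k : Fin N => k < i ∧ δ k = true),
          ((kmTail w k - w k) / kmTail w k)) = P i.val := by
        simp only [hP]
        congr 1
      rw [hQ, P_succ i, if_pos h.1]
      have hT : kmTail w i ≠ 0 := h.2.1
      have hfi : f i = 1 - w i / kmTail w i := by
        simp only [hf]
        rw [sub_div, div_self hT]
      rw [hfi]
      apply le_of_eq
      ring
    · rw [kmWeight, if_neg h]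
      have := P_le i
      linarith
  constructor
  · intro i
    rw [kmWeight]
    split
    · exact mul_nonneg (div_nonneg (hw i) (tail_nonneg i))
        (Finset.prod_nonneg fun k _ => f_nonneg k)
    · exact le_refl _
  · calc ∑ i, kmWeight w δ i ≤ ∑ i : Fin N, (P i.val - P (i.val + 1)) :=
          Finset.sum_le_sum fun i _ => km_le i
      _ = ∑ j ∈ Finset.range N, (P j - P (j + 1)) :=
          Fin.sum_univ_eq_sum_range (fun j => P j - P (j + 1)) N
      _ = P 0 - P N := Finset.sum_range_sub' P N
      _ ≤ 1 := by have := P_nonneg N; rw [P_zero]; linarith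
end
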